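/- Let M > 0, M' > M, and a ∈ ℝ. There exists a constant C > 0 such that for all x ∈ ℝ and all t > 0: ∫_{−∞}^0 t^{−1/2} e^{−(x−y−at)²/(Mt)} (1+|y|)^{−3/2} dy ≤ C ( min( t^{−1/2}, (1+|x−at|)^{−3/2} ) + (1+t)^{−1/2} e^{−(x−at)²/(M't)} ). -/

import Mathlib

/-!
Write `z = x - a t`. Three bounds on the integral hold for all `z` and `t > 0`: bounding the
Gaussian by `1` gives `O(t^{-1/2})`; bounding the weight by `1` and integrating the Gaussian
gives `O(1)`; and with `θ = √(M/M') < 1`, splitting according to whether `|z - y| < θ|z|` gives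
`O((1+|z|)^{-3/2}) + O(t^{-1/2} e^{-z²/(M't)})`, because on the near part the weight is
comparable to `(1+|z|)^{-3/2}` and on the far part the Gaussian is at most `e^{-z²/(M't)}`.
The last bound finishes the case `t ≥ 1`, where `t^{-1/2} ≤ √2 (1+t)^{-1/2}`, and the case
`t ≤ 1 ≤ |z|`, where `e^{-s} ≤ 1/s` makes `t^{-1/2} e^{-z²/(M't)} = O(|z|^{-2})`; the `O(1)`
bound covers `t, |z| ≤ 1`.
-/

open MeasureTheory Set Real

lemma setIntegral_le_integral_of_le {α : Type*} [MeasurableSpace α] {μ : Measure α}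
    {s : Set α} {f g : α → ℝ} (hf : 0 ≤ f) (hg : Integrable g μ) (hfg : f ≤ g) :
    ∫ x in s, f x ∂μ ≤ ∫ x, g x ∂μ :=
  (integral_mono_of_nonneg (ae_of_all _ hf) hg.integrableOn (ae_of_all _ hfg)).trans
    (setIntegral_le_integral hg (ae_of_all _ fun x => (hf x).trans (hfg x)))

lemma integrable_one_add_abs_rpow_neg {p : ℝ} (hp : 1 < p) :
    Integrable fun y : ℝ => (1 + |y|) ^ (-p) := by
  simpa only [norm_eq_abs] using integrable_one_add_norm (E := ℝ) (by simpa using hp)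

lemma integrable_exp_neg_sq_sub_div {b : ℝ} (hb : 0 < b) (z : ℝ) :
    Integrable fun y : ℝ => exp (-(z - y) ^ 2 / b) := by
  convert (integrable_exp_neg_mul_sq (inv_pos.2 hb)).comp_sub_left z using 3
  ring

lemma integral_exp_neg_sq_sub_div (b z : ℝ) :
    ∫ y : ℝ, exp (-(z - y) ^ 2 / b) = √(π * b) := by
  rw [← div_inv_eq_mul, ← integral_gaussian, ← integral_sub_left_eq_self _ (μ := volume) z]
  congr 1; ext y; ring_nf

lemma exp_mul_rpow_le_near_add_far {b θ p : ℝ} (hb : 0 ≤ b) (hθ0 : 0 ≤ θ) (hθ1 : θ < 1)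
    (hp : 0 ≤ p) (z y : ℝ) :
    exp (-(z - y) ^ 2 / b) * (1 + |y|) ^ (-p) ≤
      (1 - θ) ^ (-p) * (1 + |z|) ^ (-p) * exp (-(z - y) ^ 2 / b) +
        exp (-(θ * z) ^ 2 / b) * (1 + |y|) ^ (-p) := by
  have hfar_nonneg : 0 ≤ exp (-(θ * z) ^ 2 / b) * (1 + |y|) ^ (-p) := by positivity
  have hnear_nonneg : 0 ≤ (1 - θ) ^ (-p) * (1 + |z|) ^ (-p) * exp (-(z - y) ^ 2 / b) := by
    have : 0 < 1 - θ := by linarith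
    positivity
  rcases le_or_gt ((θ * z) ^ 2) ((z - y) ^ 2) with hfar | hnear
  · have : exp (-(z - y) ^ 2 / b) ≤ exp (-(θ * z) ^ 2 / b) := by
      gcongr
    have := mul_le_mul_of_nonneg_right this (by positivity : (0:ℝ) ≤ (1 + |y|) ^ (-p))
    linarith
  · rw [sq_lt_sq, abs_mul, abs_of_nonneg hθ0] at hnear
    have hy : (1 - θ) * (1 + |z|) ≤ 1 + |y| := by
      nlinarith [abs_sub_abs_le_abs_sub z y, abs_nonneg z]
    have : (1 + |y|) ^ (-p) ≤ (1 - θ) ^ (-p) * (1 + |z|) ^ (-p) := by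
      rw [← mul_rpow (by linarith) (by positivity)]
      exact rpow_le_rpow_of_nonpos (by nlinarith [abs_nonneg z]) hy (neg_nonpos.2 hp)
    have := mul_le_mul_of_nonneg_left this (exp_pos (-(z - y) ^ 2 / b)).le
    linarith

lemma rpow_neg_le_two_rpow_mul_rpow_neg {a b q : ℝ} (hb : 0 < b) (hba : b ≤ 2 * a)
    (hq : 0 ≤ q) : a ^ (-q) ≤ 2 ^ q * b ^ (-q) := by
  have ha : 0 < a := by linarith
  calc a ^ (-q) = 2 ^ q * (2 * a) ^ (-q) := by
        rw [mul_rpow zero_le_two ha.le, ← mul_assoc, ← rpow_add two_pos, add_neg_cancel,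
          rpow_zero, one_mul]
    _ ≤ 2 ^ q * b ^ (-q) :=
        mul_le_mul_of_nonneg_left (rpow_le_rpow_of_nonpos hb hba (neg_nonpos.2 hq))
          (by positivity)

lemma le_mul_add_of_le_mul_add {I a b C u v : ℝ} (h : I ≤ a * u + b * v) (ha : a ≤ C)
    (hb : b ≤ C) (hu : 0 ≤ u) (hv : 0 ≤ v) : I ≤ C * (u + v) := by
  nlinarith [mul_le_mul_of_nonneg_right ha hu, mul_le_mul_of_nonneg_right hb hv]

lemma exp_neg_le_inv {s : ℝ} (hs : 0 < s) : exp (-s) ≤ s⁻¹ := by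
  rw [exp_neg]
  exact inv_anti₀ hs ((lt_add_one s).le.trans (add_one_le_exp s))

lemma rpow_neg_half_mul_exp_le {M' t z p : ℝ} (hM' : 0 < M') (ht0 : 0 < t) (ht1 : t ≤ 1)
    (hz : 1 ≤ |z|) (hp : p ≤ 2) :
    t ^ (-(1/2:ℝ)) * exp (-z ^ 2 / (M' * t)) ≤ 4 * M' * (1 + |z|) ^ (-p) := by
  have hz2 : 0 < z ^ 2 := by nlinarith [sq_abs z]
  have ht_half : t ^ (-(1/2:ℝ)) * t = t ^ (1/2:ℝ) := by
    rw [← rpow_add_one ht0.ne']; norm_num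
  calc t ^ (-(1/2:ℝ)) * exp (-z ^ 2 / (M' * t))
      ≤ t ^ (-(1/2:ℝ)) * (z ^ 2 / (M' * t))⁻¹ := by
        rw [neg_div]; gcongr; exact exp_neg_le_inv (div_pos hz2 (by positivity))
    _ = M' * t ^ (1/2:ℝ) * |z| ^ (-2:ℝ) := by
        rw [rpow_neg (abs_nonneg z), rpow_two, sq_abs, ← ht_half, inv_div]
        ring
    _ ≤ M' * 1 * (2 ^ (2:ℝ) * (1 + |z|) ^ (-2:ℝ)) := by
        gcongr
        · exact rpow_le_one ht0.le ht1 (by norm_num)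
        · exact rpow_neg_le_two_rpow_mul_rpow_neg (by positivity) (by linarith) zero_le_two
    _ ≤ 4 * M' * (1 + |z|) ^ (-p) := by
        have : (1 + |z|) ^ (-2:ℝ) ≤ (1 + |z|) ^ (-p) :=
          rpow_le_rpow_of_exponent_le (by linarith [abs_nonneg z]) (by linarith)
        rw [show (2:ℝ) ^ (2:ℝ) = 4 by norm_num]
        nlinarith

noncomputable def convectionIntegral (M p t z : ℝ) : ℝ :=
  ∫ y in Iic (0:ℝ), t ^ (-(1/2:ℝ)) * exp (-(z - y) ^ 2 / (M * t)) * (1 + |y|) ^ (-p)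

section convectionIntegral

variable {M p t : ℝ}

lemma integral_rpow_neg_half_mul_exp (ht : 0 < t) (z : ℝ) :
    ∫ y, t ^ (-(1/2:ℝ)) * exp (-(z - y) ^ 2 / (M * t)) = √(π * M) := by
  rw [integral_const_mul, integral_exp_neg_sq_sub_div, ← mul_assoc, sqrt_mul' _ ht.le,
    sqrt_eq_rpow t, ← mul_assoc, mul_comm, ← mul_assoc, ← rpow_add ht]
  norm_num

lemma convectionIntegral_le_rpow_neg_half (hM : 0 < M) (hp : 1 < p) (ht : 0 < t) (z : ℝ) :
    convectionIntegral M p t z ≤ (∫ y, (1 + |y|) ^ (-p)) * t ^ (-(1/2:ℝ)) := by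
  rw [mul_comm, ← integral_const_mul]
  refine setIntegral_le_integral_of_le (fun y => by positivity)
    ((integrable_one_add_abs_rpow_neg hp).const_mul _) fun y => ?_
  have hexp : exp (-(z - y) ^ 2 / (M * t)) ≤ 1 :=
    exp_le_one_iff.2 (div_nonpos_of_nonpos_of_nonneg (neg_nonpos.2 (sq_nonneg _)) (by positivity))
  exact mul_le_mul_of_nonneg_right (mul_le_of_le_one_right (by positivity) hexp) (by positivity)

lemma convectionIntegral_le_sqrt (hM : 0 < M) (hp : 0 ≤ p) (ht : 0 < t) (z : ℝ) :
    convectionIntegral M p t z ≤ √(π * M) := by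
  rw [← integral_rpow_neg_half_mul_exp ht z]
  refine setIntegral_le_integral_of_le (fun y => by positivity)
    ((integrable_exp_neg_sq_sub_div (by positivity) z).const_mul _) fun y => ?_
  exact mul_le_of_le_one_right (by positivity)
    (rpow_le_one_of_one_le_of_nonpos (by simp) (by linarith))

lemma convectionIntegral_le_near_add_far {M' : ℝ} (hM : 0 < M) (hMM' : M < M') (hp : 1 < p)
    (ht : 0 < t) (z : ℝ) :
    convectionIntegral M p t z ≤
      √(π * M) * (1 - √(M / M')) ^ (-p) * (1 + |z|) ^ (-p) +
        (∫ y, (1 + |y|) ^ (-p)) * (t ^ (-(1/2:ℝ)) * exp (-z ^ 2 / (M' * t))) := by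
  have hM' : 0 < M' := hM.trans hMM'
  have hθ1 : √(M / M') < 1 := (sqrt_lt' one_pos).2 (by simpa [div_lt_one hM'] using hMM')
  have hfar : -(√(M / M') * z) ^ 2 / (M * t) = -z ^ 2 / (M' * t) := by
    rw [mul_pow, sq_sqrt (by positivity)]
    field_simp
  set K := (1 - √(M / M')) ^ (-p) * (1 + |z|) ^ (-p)
  set E := t ^ (-(1/2:ℝ)) * exp (-z ^ 2 / (M' * t))
  have hgauss := (integrable_exp_neg_sq_sub_div (mul_pos hM ht) z).const_mul (t ^ (-(1/2:ℝ)))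
  have hweight := integrable_one_add_abs_rpow_neg hp
  calc convectionIntegral M p t z
      ≤ ∫ y, K * (t ^ (-(1/2:ℝ)) * exp (-(z - y) ^ 2 / (M * t))) + E * (1 + |y|) ^ (-p) := by
        refine setIntegral_le_integral_of_le (fun y => by positivity)
          ((hgauss.const_mul K).add (hweight.const_mul E)) fun y => ?_
        have := exp_mul_rpow_le_near_add_far (b := M * t) (p := p) (by positivity)
          (sqrt_nonneg _) hθ1 (by linarith) z y
        rw [hfar] at this
        have := mul_le_mul_of_nonneg_left this (by positivity : (0:ℝ) ≤ t ^ (-(1/2:ℝ)))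
        simp only [K, E]
        linarith
    _ = √(π * M) * (1 - √(M / M')) ^ (-p) * (1 + |z|) ^ (-p) +
          (∫ y, (1 + |y|) ^ (-p)) * E := by
        rw [integral_add (hgauss.const_mul K) (hweight.const_mul E), integral_const_mul K,
          integral_const_mul E, integral_rpow_neg_half_mul_exp ht]
        ring

lemma exists_convectionIntegral_le_one_add_abs_rpow_neg {M' : ℝ} (hM : 0 < M) (hMM' : M < M')
    (hp1 : 1 < p) (hp2 : p ≤ 2) :
    ∃ C, ∀ z t : ℝ, 0 < t → convectionIntegral M p t z ≤
      C * ((1 + |z|) ^ (-p) + (1 + t) ^ (-(1/2:ℝ)) * exp (-z ^ 2 / (M' * t))) := by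
  set W := ∫ y : ℝ, (1 + |y|) ^ (-p)
  set S := √(π * M)
  set K := (1 - √(M / M')) ^ (-p)
  have hW : 0 ≤ W := by positivity
  have hθ1 : √(M / M') ≤ 1 := sqrt_le_one.2 ((div_le_one (hM.trans hMM')).2 hMM'.le)
  have hK : 0 ≤ K := rpow_nonneg (sub_nonneg.2 hθ1) _
  have hS : 0 ≤ S := sqrt_nonneg _
  refine ⟨S * K + S * 2 ^ p + W * (4 * M') + W * 2 ^ (1/2:ℝ), fun z t ht => ?_⟩
  have hP : 0 ≤ (1 + |z|) ^ (-p) := by positivity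
  have hg : 0 ≤ (1 + t) ^ (-(1/2:ℝ)) * exp (-z ^ 2 / (M' * t)) := by positivity
  have hSK : 0 ≤ S * K := mul_nonneg hS hK
  have hS2 : 0 ≤ S * 2 ^ p := by positivity
  have hW4 : 0 ≤ W * (4 * M') := mul_nonneg hW (by linarith)
  have hW2 : 0 ≤ W * 2 ^ (1/2:ℝ) := by positivity
  have hnear_far := convectionIntegral_le_near_add_far hM hMM' hp1 ht z
  rcases le_total 1 t with ht1 | ht1
  · have ht_half : t ^ (-(1/2:ℝ)) ≤ 2 ^ (1/2:ℝ) * (1 + t) ^ (-(1/2:ℝ)) :=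
      rpow_neg_le_two_rpow_mul_rpow_neg (by positivity) (by linarith) (by norm_num)
    refine le_mul_add_of_le_mul_add (a := S * K) (b := W * 2 ^ (1/2:ℝ)) ?_
      (by linarith) (by linarith) hP hg
    have := mul_le_mul_of_nonneg_left
      (mul_le_mul_of_nonneg_right ht_half (exp_pos (-z ^ 2 / (M' * t))).le) hW
    linarith
  rcases le_total |z| 1 with hz1 | hz1
  · have hz_near : 1 ≤ 2 ^ p * (1 + |z|) ^ (-p) := by
      simpa using rpow_neg_le_two_rpow_mul_rpow_neg (a := 1) (b := 1 + |z|) (q := p)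
        (by positivity) (by linarith) (by linarith)
    refine le_mul_add_of_le_mul_add (a := S * 2 ^ p) (b := 0) ?_
      (by linarith) (by linarith) hP hg
    have := mul_le_mul_of_nonneg_left hz_near hS
    have := convectionIntegral_le_sqrt (p := p) hM (by linarith) ht z
    linarith
  · have hfar := rpow_neg_half_mul_exp_le (hM.trans hMM') ht ht1 hz1 hp2
    refine le_mul_add_of_le_mul_add (a := S * K + W * (4 * M')) (b := 0) ?_
      (by linarith) (by linarith) hP hg
    have := mul_le_mul_of_nonneg_left hfar hW
    linarith

theorem convectionIntegral_le {M' : ℝ} (hM : 0 < M) (hMM' : M < M') (hp1 : 1 < p)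
    (hp2 : p ≤ 2) :
    ∃ C > 0, ∀ z t : ℝ, 0 < t → convectionIntegral M p t z ≤
      C * (min (t ^ (-(1/2:ℝ))) ((1 + |z|) ^ (-p)) +
        (1 + t) ^ (-(1/2:ℝ)) * exp (-z ^ 2 / (M' * t))) := by
  obtain ⟨C, hC⟩ := exists_convectionIntegral_le_one_add_abs_rpow_neg hM hMM' hp1 hp2
  set W := ∫ y : ℝ, (1 + |y|) ^ (-p)
  refine ⟨max (max C W) 1, by positivity, fun z t ht => ?_⟩
  have hg : 0 ≤ (1 + t) ^ (-(1/2:ℝ)) * exp (-z ^ 2 / (M' * t)) := by positivity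
  rw [← min_add_add_right, mul_min_of_nonneg _ _ (by positivity)]
  have hCle : C ≤ max (max C W) 1 := (le_max_left _ _).trans (le_max_left _ _)
  have hWle : W ≤ max (max C W) 1 := (le_max_right _ _).trans (le_max_left _ _)
  refine le_min ?_ ((hC z t ht).trans (by gcongr))
  refine le_mul_add_of_le_mul_add (a := W) (b := 0) ?_ hWle (by positivity) (by positivity) hg
  simpa using convectionIntegral_le_rpow_neg_half hM hp1 ht z

end convectionIntegral

theorem convection_estimate (M M' a : ℝ) (hM : 0 < M) (hM' : M < M') :
    ∃ C > 0, ∀ (x t : ℝ), 0 < t →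
      (∫ y in Set.Iic (0:ℝ),
          t ^ (-(1/2 : ℝ)) * Real.exp (-(x - y - a*t)^2 / (M*t)) *
            (1 + |y|) ^ (-(3/2 : ℝ))) ≤
        C * (min (t ^ (-(1/2 : ℝ))) ((1 + |x - a*t|) ^ (-(3/2 : ℝ))) +
          (1 + t) ^ (-(1/2 : ℝ)) * Real.exp (-(x - a*t)^2 / (M'*t))) := by
  obtain ⟨C, hC, hbound⟩ := convectionIntegral_le (p := 3/2) hM hM' (by norm_num) (by norm_num)
  refine ⟨C, hC, fun x t ht => ?_⟩
  convert hbound (x - a * t) t ht using 1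
  exact setIntegral_congr_fun measurableSet_Iic fun y _ => by ring_nf
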